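/- For all real x with 0 < x < π/2, 3 + (3/20 + (1/280)x^2 + (23/33600)·x^4)·x^3·tan x < 2·(sin x/x) + (tan x)/x < 3 + (3/20 + (1/280)x^2 + μ·x^4)·x^3·tan x, where μ = (17920 − 168π^4 − π^6)/(70π^8). -/

import Mathlib

/-!
Multiplying by `x cos x > 0` turns both inequalities into sign statements for
`sin 2x + sin x - 3 x cos x - c x⁴ sin x`, with `c` the bracketed polynomial. The alternating
Taylor bounds for `sin` and `cos` on `[0, ∞)` reduce each sign statement to a polynomial
inequality on an interval. For the lower bound the polynomial is `x¹¹ q(x²)`: the terms up to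
`x⁹` cancel, which is what fixes `23/33600`. The constant `μ` makes the remainder vanish at
`π/2`, so Taylor bounds about `0` must fail near `π/2`; on `[1.43, π/2]` the remainder is instead
shown to be increasing, its derivative being bounded below by the same method.
-/

open Real

section Taylor

open Finset Nat

lemma hasDerivAt_pow_succ_div_factorial (m : ℕ) (x : ℝ) :
    HasDerivAt (fun y : ℝ => y ^ (m + 1) / (m + 1)!) (x ^ m / m !) x := by
  refine ((hasDerivAt_pow (m + 1) x).div_const _).congr_deriv ?_
  rw [factorial_succ]
  push_cast
  field_simp

noncomputable def sinTaylor (n : ℕ) (x : ℝ) : ℝ :=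
  ∑ k ∈ range n, (-1) ^ k * (x ^ (2 * k + 1) / (2 * k + 1)!)

noncomputable def cosTaylor (n : ℕ) (x : ℝ) : ℝ :=
  ∑ k ∈ range n, (-1) ^ k * (x ^ (2 * k) / (2 * k)!)

lemma hasDerivAt_sinTaylor (n : ℕ) (x : ℝ) : HasDerivAt (sinTaylor n) (cosTaylor n x) x := by
  unfold sinTaylor cosTaylor
  exact HasDerivAt.fun_sum fun k _ => (hasDerivAt_pow_succ_div_factorial (2 * k) x).const_mul _

lemma cosTaylor_succ (n : ℕ) (x : ℝ) :
    cosTaylor (n + 1) x =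
      1 - ∑ k ∈ range n, (-1) ^ k * (x ^ (2 * k + 1 + 1) / (2 * k + 1 + 1)!) := by
  rw [cosTaylor, sum_range_succ', sub_eq_neg_add, ← sum_neg_distrib]
  simp only [pow_succ (-1 : ℝ), pow_zero, mul_zero, factorial_zero, cast_one, div_one, one_mul,
    mul_neg_one, neg_mul, mul_add_one]

lemma hasDerivAt_cosTaylor (n : ℕ) (x : ℝ) :
    HasDerivAt (cosTaylor (n + 1)) (-sinTaylor n x) x := by
  rw [show cosTaylor (n + 1) = _ from funext (cosTaylor_succ n), sinTaylor, ← zero_sub]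
  exact (HasDerivAt.fun_sum fun k _ =>
    (hasDerivAt_pow_succ_div_factorial (2 * k + 1) x).const_mul _).const_sub 1

lemma nonneg_of_hasDerivAt_nonneg {f f' : ℝ → ℝ} {a x : ℝ} (hf : ∀ y, HasDerivAt f (f' y) y)
    (ha : 0 ≤ f a) (hf' : ∀ y, a ≤ y → 0 ≤ f' y) (hx : a ≤ x) : 0 ≤ f x := by
  have hmono : MonotoneOn f (Set.Ici a) := by
    refine monotoneOn_of_hasDerivWithinAt_nonneg (convex_Ici a)
      (fun y _ => (hf y).continuousAt.continuousWithinAt) (fun y _ => (hf y).hasDerivWithinAt)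
      fun y hy => ?_
    rw [interior_Ici] at hy
    exact hf' y hy.le
  exact ha.trans (hmono Set.self_mem_Ici hx hx)

lemma neg_one_pow_mul_sinTaylor_sub_sin_nonneg_of_cosTaylor {n : ℕ}
    (hcos : ∀ y, 0 ≤ y → 0 ≤ (-1) ^ n * (cosTaylor (n + 1) y - cos y)) {x : ℝ}
    (hx : 0 ≤ x) :
    0 ≤ (-1) ^ n * (sinTaylor (n + 1) x - sin x) :=
  nonneg_of_hasDerivAt_nonneg (f := fun y => (-1) ^ n * (sinTaylor (n + 1) y - sin y))
    (fun y => ((hasDerivAt_sinTaylor _ y).sub (hasDerivAt_sin y)).const_mul _)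
    (by simp [sinTaylor]) hcos hx

lemma neg_one_pow_mul_cosTaylor_sub_cos_nonneg (n : ℕ) {x : ℝ} (hx : 0 ≤ x) :
    0 ≤ (-1) ^ n * (cosTaylor (n + 1) x - cos x) := by
  induction n generalizing x with
  | zero => simpa [cosTaylor] using cos_le_one x
  | succ n ih =>
    refine nonneg_of_hasDerivAt_nonneg
      (f := fun y => (-1) ^ (n + 1) * (cosTaylor (n + 2) y - cos y))
      (fun y => ((hasDerivAt_cosTaylor _ y).sub (hasDerivAt_cos y)).const_mul _)
      (by simp [cosTaylor_succ]) (fun y hy => ?_) hx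
    convert neg_one_pow_mul_sinTaylor_sub_sin_nonneg_of_cosTaylor (fun _ => ih) hy using 1
    ring

lemma neg_one_pow_mul_sinTaylor_sub_sin_nonneg (n : ℕ) {x : ℝ} (hx : 0 ≤ x) :
    0 ≤ (-1) ^ n * (sinTaylor (n + 1) x - sin x) :=
  neg_one_pow_mul_sinTaylor_sub_sin_nonneg_of_cosTaylor
    (fun _ => neg_one_pow_mul_cosTaylor_sub_cos_nonneg n) hx

lemma sin_le_sinTaylor {n : ℕ} (hn : Even n) {x : ℝ} (hx : 0 ≤ x) :
    sin x ≤ sinTaylor (n + 1) x := by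
  simpa [hn.neg_one_pow] using neg_one_pow_mul_sinTaylor_sub_sin_nonneg n hx

lemma sinTaylor_le_sin {n : ℕ} (hn : Odd n) {x : ℝ} (hx : 0 ≤ x) :
    sinTaylor (n + 1) x ≤ sin x := by
  simpa [hn.neg_one_pow] using neg_one_pow_mul_sinTaylor_sub_sin_nonneg n hx

lemma cos_le_cosTaylor {n : ℕ} (hn : Even n) {x : ℝ} (hx : 0 ≤ x) :
    cos x ≤ cosTaylor (n + 1) x := by
  simpa [hn.neg_one_pow] using neg_one_pow_mul_cosTaylor_sub_cos_nonneg n hx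

lemma cosTaylor_le_cos {n : ℕ} (hn : Odd n) {x : ℝ} (hx : 0 ≤ x) :
    cosTaylor (n + 1) x ≤ cos x := by
  simpa [hn.neg_one_pow] using neg_one_pow_mul_cosTaylor_sub_cos_nonneg n hx

end Taylor

noncomputable def huygensMu : ℝ := (17920 - 168 * π ^ 4 - π ^ 6) / (70 * π ^ 8)

lemma pi_sq_mem_Ioo : π ^ 2 ∈ Set.Ioo (9.8696002 : ℝ) 9.8696066 := by
  have := pi_gt_d6
  have := pi_lt_d6
  constructor <;> nlinarith

lemma le_huygensMu : 894 / 1000000 ≤ huygensMu := by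
  have ht := pi_sq_mem_Ioo.2
  have h4 := pow_lt_pow_left₀ ht (sq_nonneg π) two_ne_zero
  have h6 := pow_lt_pow_left₀ ht (sq_nonneg π) three_ne_zero
  have h8 := pow_lt_pow_left₀ ht (sq_nonneg π) four_ne_zero
  simp only [← pow_mul] at h4 h6 h8
  rw [huygensMu, le_div_iff₀ (by positivity)]
  norm_num at h4 h6 h8 ⊢
  linarith

lemma huygensMu_le : huygensMu ≤ 895 / 1000000 := by
  have ht := pi_sq_mem_Ioo.1
  have h4 := pow_lt_pow_left₀ ht (by norm_num) two_ne_zero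
  have h6 := pow_lt_pow_left₀ ht (by norm_num) three_ne_zero
  have h8 := pow_lt_pow_left₀ ht (by norm_num) four_ne_zero
  simp only [← pow_mul] at h4 h6 h8
  rw [huygensMu, div_le_iff₀ (by positivity)]
  norm_num at h4 h6 h8 ⊢
  linarith

noncomputable def huygensRemainder (c x : ℝ) : ℝ :=
  sin (2 * x) + sin x - 3 * x * cos x - c * x ^ 4 * sin x

lemma two_mul_sin_div_add_tan_div_sub_eq {x : ℝ} (c : ℝ) (hx : x ≠ 0) (hcos : cos x ≠ 0) :
    2 * (sin x / x) + tan x / x - (3 + c * x ^ 3 * tan x) =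
      huygensRemainder c x / (x * cos x) := by
  rw [huygensRemainder, sin_two_mul, tan_eq_sin_div_cos]
  field_simp
  ring

lemma huygensRemainder_pos {x : ℝ} (h1 : 0 < x) (h2 : x < π / 2) :
    0 < huygensRemainder (3 / 20 + 1 / 280 * x ^ 2 + 23 / 33600 * x ^ 4) x := by
  have hx := h1.le
  have ht : x ^ 2 ≤ 2.4675 := by nlinarith [pi_lt_d6]
  -- the Taylor bounds below give `huygensRemainder … ≥ x¹¹ q(x²)`
  have hq : 0 < 47/739200 - 49639/12108096000*x^2 + 15209/145297152000*(x^2)^2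
      - 127/69742632960*(x^2)^3 + 289/17435658240000*(x^2)^4 - 23/209227898880000*(x^2)^5 := by
    have h0 := sq_nonneg x
    nlinarith [pow_le_pow_left₀ h0 ht 3, pow_le_pow_left₀ h0 ht 5, pow_nonneg h0 4]
  have hsin2 := sinTaylor_le_sin (n := 7) (by decide) (by positivity : 0 ≤ 2 * x)
  have hsin := sinTaylor_le_sin (n := 7) (by decide) hx
  have hsin' := sin_le_sinTaylor (n := 6) (by decide) hx
  have hcos := cos_le_cosTaylor (n := 6) (by decide) hx
  norm_num [sinTaylor, cosTaylor, Finset.sum_range_succ, Nat.factorial] at hsin2 hsin hsin' hcos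
  rw [huygensRemainder]
  linarith [mul_pos (pow_pos h1 11) hq, mul_nonneg hx (sub_nonneg.2 hcos),
    mul_nonneg (by positivity : 0 ≤ (3 / 20 + 1 / 280 * x ^ 2 + 23 / 33600 * x ^ 4) * x ^ 4)
      (sub_nonneg.2 hsin')]

lemma huygensRemainder_neg_of_le {x : ℝ} (h1 : 0 < x) (h2 : x ≤ 1.43) :
    huygensRemainder (3 / 20 + 1 / 280 * x ^ 2 + huygensMu * x ^ 4) x < 0 := by
  have hx := h1.le
  have ht : x ^ 2 ≤ 2.0449 := by nlinarith
  -- the Taylor bounds below, with `894/1000000` for `huygensMu`, give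
  -- `huygensRemainder … ≤ -x⁹ q(x²)`
  have hq : 0 < 4399/21000000 - 9751/99000000*x^2 + 11058643/1891890000000*(x^2)^2
      - 119548453/817296480000000*(x^2)^3 + 14100629/6947020080000000*(x^2)^4
      - 119531/5448643200000000*(x^2)^5 + 64459/457686028800000000*(x^2)^6
      - 149/217945728000000000*(x^2)^7 := by
    have h0 := sq_nonneg x
    nlinarith [pow_le_pow_left₀ h0 ht 3, pow_le_pow_left₀ h0 ht 5, pow_le_pow_left₀ h0 ht 7,
      pow_nonneg h0 4, pow_nonneg h0 6, mul_nonneg h0 (sub_nonneg.2 ht)]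
  have hsin2 := sin_le_sinTaylor (n := 8) (by decide) (by positivity : 0 ≤ 2 * x)
  have hsin := sin_le_sinTaylor (n := 6) (by decide) hx
  have hsin' := sinTaylor_le_sin (n := 7) (by decide) hx
  have hcos := cosTaylor_le_cos (n := 7) (by decide) hx
  have hsin_nonneg : 0 ≤ sin x := sin_nonneg_of_nonneg_of_le_pi hx (by linarith [pi_gt_three])
  norm_num [sinTaylor, cosTaylor, Finset.sum_range_succ, Nat.factorial] at hsin2 hsin hsin' hcos
  rw [huygensRemainder]
  linarith [mul_pos (pow_pos h1 9) hq, mul_nonneg hx (sub_nonneg.2 hcos),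
    mul_nonneg (by positivity : 0 ≤ (3 / 20 + 1 / 280 * x ^ 2 + 894 / 1000000 * x ^ 4) * x ^ 4)
      (sub_nonneg.2 hsin'),
    mul_nonneg (mul_nonneg (pow_nonneg hx 8) hsin_nonneg) (sub_nonneg.2 le_huygensMu)]

lemma hasDerivAt_huygensRemainder {c : ℝ → ℝ} {c' x : ℝ} (hc : HasDerivAt c c' x) :
    HasDerivAt (fun y => huygensRemainder (c y) y)
      (2 * cos (2 * x) + cos x - 3 * (cos x - x * sin x)
        - (c' * x ^ 4 * sin x + c x * (4 * x ^ 3 * sin x + x ^ 4 * cos x))) x := by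
  have hsin2 : HasDerivAt (fun y => sin (2 * y)) (2 * cos (2 * x)) x := by
    simpa [mul_comm] using ((hasDerivAt_id x).const_mul 2).sin
  have hxcos := ((hasDerivAt_id x).const_mul 3).fun_mul (hasDerivAt_cos x)
  have hpow := (hc.fun_mul (hasDerivAt_pow 4 x)).fun_mul (hasDerivAt_sin x)
  refine (((hsin2.fun_add (hasDerivAt_sin x)).fun_sub hxcos).fun_sub hpow).congr_deriv ?_
  simp only [id, Nat.cast_ofNat]
  ring

lemma huygensRemainder_pi_div_two :
    huygensRemainder (3 / 20 + 1 / 280 * (π / 2) ^ 2 + huygensMu * (π / 2) ^ 4) (π / 2) = 0 := by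
  rw [huygensRemainder, mul_div_cancel₀ π two_ne_zero, sin_pi, sin_pi_div_two, cos_pi_div_two,
    huygensMu]
  field_simp
  ring

lemma huygensRemainder_deriv_pos {x : ℝ} (ha : 1.43 < x) (hb : x < π / 2) :
    0 < 2 * cos (2 * x) + cos x - 3 * (cos x - x * sin x)
      - ((1 / 280 * (2 * x) + huygensMu * (4 * x ^ 3)) * x ^ 4 * sin x
        + (3 / 20 + 1 / 280 * x ^ 2 + huygensMu * x ^ 4)
          * (4 * x ^ 3 * sin x + x ^ 4 * cos x)) := by
  have hx : 0 ≤ x := by linarith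
  -- minus the lower bound for the derivative that the Taylor bounds below give
  have hpoly : 663/350000*x^8 - 1922/1771875*x^10 + 9966421/130977000000*x^12
      - 2915281/1362160800000*x^14 + 3043/72576000000*x^16 < 0 := by
    have h0 : (0:ℝ) ≤ x - 1.43 := by linarith
    have hw : x - 1.43 ≤ 0.1407965 := by linarith [pi_lt_d6]
    nlinarith [pow_le_pow_left₀ h0 hw 8, pow_le_pow_left₀ h0 hw 9, pow_le_pow_left₀ h0 hw 10,
      pow_le_pow_left₀ h0 hw 11, pow_le_pow_left₀ h0 hw 13, pow_le_pow_left₀ h0 hw 14,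
      pow_le_pow_left₀ h0 hw 15, pow_le_pow_left₀ h0 hw 16,
      pow_nonneg h0 2, pow_nonneg h0 3, pow_nonneg h0 4, pow_nonneg h0 5,
      pow_nonneg h0 6, pow_nonneg h0 7, pow_nonneg h0 12, h0, hw]
  have hsin_nonneg : 0 ≤ sin x := sin_nonneg_of_nonneg_of_le_pi hx (by linarith [pi_gt_three])
  have hcos_nonneg : 0 ≤ cos x := cos_nonneg_of_mem_Icc ⟨by linarith, hb.le⟩
  have hcos2 := cosTaylor_le_cos (n := 7) (by decide) (by positivity : 0 ≤ 2 * x)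
  have hcos := cos_le_cosTaylor (n := 4) (by decide) hx
  have hsin := sin_le_sinTaylor (n := 4) (by decide) hx
  have hsin' := sinTaylor_le_sin (n := 5) (by decide) hx
  norm_num [sinTaylor, cosTaylor, Finset.sum_range_succ, Nat.factorial] at hcos2 hcos hsin hsin'
  have hmu := sub_nonneg.2 huygensMu_le
  have hsin_le := sub_nonneg.2 hsin
  have hcos_le := sub_nonneg.2 hcos
  linarith [mul_nonneg hmu (mul_nonneg (pow_nonneg hx 7) hsin_nonneg),
    mul_nonneg hmu (mul_nonneg (pow_nonneg hx 8) hcos_nonneg), mul_nonneg hx (sub_nonneg.2 hsin'),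
    mul_nonneg (pow_nonneg hx 3) hsin_le, mul_nonneg (pow_nonneg hx 5) hsin_le,
    mul_nonneg (pow_nonneg hx 7) hsin_le, mul_nonneg (pow_nonneg hx 4) hcos_le,
    mul_nonneg (pow_nonneg hx 6) hcos_le, mul_nonneg (pow_nonneg hx 8) hcos_le]

lemma huygensRemainder_strictMonoOn :
    StrictMonoOn (fun y => huygensRemainder (3 / 20 + 1 / 280 * y ^ 2 + huygensMu * y ^ 4) y)
      (Set.Icc 1.43 (π / 2)) := by
  have hd (x : ℝ) := hasDerivAt_huygensRemainder
    ((((hasDerivAt_pow 2 x).const_mul (1 / 280)).const_add (3 / 20)).fun_add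
      ((hasDerivAt_pow 4 x).const_mul huygensMu))
  refine strictMonoOn_of_deriv_pos (convex_Icc _ _)
    (fun y _ => (hd y).continuousAt.continuousWithinAt) fun x hx => ?_
  rw [interior_Icc] at hx
  rw [(hd x).deriv]
  simpa only [Nat.cast_ofNat, Nat.reduceSub, pow_one] using huygensRemainder_deriv_pos hx.1 hx.2

lemma huygensRemainder_neg {x : ℝ} (h1 : 0 < x) (h2 : x < π / 2) :
    huygensRemainder (3 / 20 + 1 / 280 * x ^ 2 + huygensMu * x ^ 4) x < 0 := by
  rcases le_or_gt x 1.43 with hx | hx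
  · exact huygensRemainder_neg_of_le h1 hx
  · have hmem : π / 2 ∈ Set.Icc (1.43 : ℝ) (π / 2) := ⟨by linarith [pi_gt_d2], le_rfl⟩
    simpa only [huygensRemainder_pi_div_two] using
      huygensRemainder_strictMonoOn ⟨hx.le, h2.le⟩ hmem h2

theorem stmt_18 (x : ℝ) (h1 : 0 < x) (h2 : x < π / 2) :
    3 + (3 / 20 + (1 / 280) * x ^ 2 + (23 / 33600) * x ^ 4) * x ^ 3 * tan x <
      2 * (sin x / x) + tan x / x ∧
    2 * (sin x / x) + tan x / x <
      3 + (3 / 20 + (1 / 280) * x ^ 2 +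
        ((17920 - 168 * π ^ 4 - π ^ 6) / (70 * π ^ 8)) * x ^ 4) * x ^ 3 * tan x := by
  have hcos : 0 < cos x := cos_pos_of_mem_Ioo ⟨by linarith, h2⟩
  have hxcos : 0 < x * cos x := mul_pos h1 hcos
  constructor
  · rw [← sub_pos, two_mul_sin_div_add_tan_div_sub_eq _ h1.ne' hcos.ne']
    exact div_pos (huygensRemainder_pos h1 h2) hxcos
  · rw [← sub_neg, two_mul_sin_div_add_tan_div_sub_eq _ h1.ne' hcos.ne']
    exact div_neg_of_neg_of_pos (huygensRemainder_neg h1 h2) hxcos
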